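/- arXiv:1103.1111 — 3 statements merged into one kernel-verified Lean document; each statement's English description precedes it below -/
import Mathlib

section
/- Let p ≥ 2 and d ≥ 4p² − 2p + 1 be integers. Then (2/p)·Σ_{i=0}^{p−1} C(d + 2p − 1 − 2i, 2p − 2i) ≥ (2/p)·(C(d+2p−1, 2p) + C(d+2p−3, 2p−2)) ≥ 4·C(d+2p−2, 2p−1) + 2, where C(n,r) denotes the binomial coefficient. -/
open Finset

lemma add_le_sum_range_of_two_le {M : Type*} [AddCommMonoid M] [PartialOrder M]
    [IsOrderedAddMonoid M] {f : ℕ → M} (hf : ∀ i, 0 ≤ f i) {p : ℕ} (hp : 2 ≤ p) :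
    f 0 + f 1 ≤ ∑ i ∈ range p, f i := by
  calc f 0 + f 1 = ∑ i ∈ range 2, f i := by simp [sum_range_succ]
    _ ≤ ∑ i ∈ range p, f i :=
      sum_le_sum_of_subset_of_nonneg (range_subset_range.mpr hp) fun i _ _ => hf i

/-- Since `(n + 1) * C(n, 2p - 1) = 2p * C(n + 1, 2p)`, the right side equals
`(n + 1) / p² * C(n, 2p - 1)`. -/
lemma four_mul_choose_le_two_div_mul_choose_succ {n p : ℕ} (hp : 0 < p)
    (h : 4 * p ^ 2 ≤ n + 1) :
    4 * (n.choose (2 * p - 1) : ℝ) ≤ 2 / p * ((n + 1).choose (2 * p) : ℝ) := by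
  have hrec : ((n + 1 : ℕ) : ℝ) * n.choose (2 * p - 1) = (n + 1).choose (2 * p) * (2 * p) := by
    have := Nat.add_one_mul_choose_eq n (2 * p - 1)
    rw [Nat.sub_add_cancel (by omega)] at this
    exact_mod_cast this
  have hpR : (0 : ℝ) < p := by exact_mod_cast hp
  have hR : 4 * (p : ℝ) ^ 2 ≤ (n + 1 : ℕ) := by exact_mod_cast h
  rw [div_mul_eq_mul_div, le_div_iff₀ hpR]
  nlinarith [Nat.cast_nonneg (α := ℝ) (n.choose (2 * p - 1))]

/-- For integers `p ≥ 2`, `d ≥ 4p² − 2p + 1`: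
`(2/p)·Σ_{i=0}^{p−1} C(d+2p−1−2i, 2p−2i) ≥ (2/p)·(C(d+2p−1,2p)+C(d+2p−3,2p−2))
 ≥ 4·C(d+2p−2,2p−1) + 2`. -/
theorem stmt_4 (p d : ℕ) (hp : 2 ≤ p) (hd : 4 * p ^ 2 - 2 * p + 1 ≤ d) :
    ((2 : ℝ) / p) * ∑ i ∈ Finset.range p,
        ((d + 2 * p - 1 - 2 * i).choose (2 * p - 2 * i) : ℝ)
      ≥ ((2 : ℝ) / p) *
        (((d + 2 * p - 1).choose (2 * p) : ℝ) + ((d + 2 * p - 3).choose (2 * p - 2) : ℝ)) ∧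
    ((2 : ℝ) / p) *
        (((d + 2 * p - 1).choose (2 * p) : ℝ) + ((d + 2 * p - 3).choose (2 * p - 2) : ℝ))
      ≥ 4 * ((d + 2 * p - 2).choose (2 * p - 1) : ℝ) + 2 := by
  have hpR : (0 : ℝ) < p := by positivity
  have hsq : 2 * p ≤ p ^ 2 := by nlinarith
  constructor
  · gcongr
    refine (le_of_eq ?_).trans (add_le_sum_range_of_two_le (fun _ => by positivity) hp)
    congr 3
  · have hA := four_mul_choose_le_two_div_mul_choose_succ (n := d + 2 * p - 2) (p := p)
      (by omega) (by omega)
    rw [show d + 2 * p - 2 + 1 = d + 2 * p - 1 by omega] at hA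
    have hB : p ≤ (d + 2 * p - 3).choose (2 * p - 2) :=
      calc p ≤ 2 * p - 2 + 1 := by omega
        _ = (2 * p - 2 + 1).choose (2 * p - 2) := (Nat.choose_succ_self_right _).symm
        _ ≤ _ := Nat.choose_le_choose _ (by omega)
    have hB' : 2 ≤ 2 / (p : ℝ) * (d + 2 * p - 3).choose (2 * p - 2) := by
      rw [div_mul_eq_mul_div, le_div_iff₀ hpR]
      have : (p : ℝ) ≤ (d + 2 * p - 3).choose (2 * p - 2) := by exact_mod_cast hB
      linarith
    rw [mul_add]
    linarith
end

section
/- The minimal polynomial over ℚ of cos(2π/11) is x⁵ + (1/2)x⁴ − x³ − (3/8)x² + (3/16)x + 1/32; in particular this quintic is irreducible over ℚ and has cos(2lπ/11) as roots for l = 1,...,5. -/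
open Polynomial Real

private lemma cos_root_aux (l : ℕ) (hl1 : 1 ≤ l) (hl5 : l ≤ 5) :
    (Real.cos (2 * (l:ℝ) * π / 11))^5 + (1/2) * (Real.cos (2 * (l:ℝ) * π / 11))^4
      - (Real.cos (2 * (l:ℝ) * π / 11))^3 - (3/8) * (Real.cos (2 * (l:ℝ) * π / 11))^2
      + (3/16) * (Real.cos (2 * (l:ℝ) * π / 11)) + 1/32 = 0 := by
  set x : ℝ := 2 * (l:ℝ) * π / 11 with hx
  set w : ℂ := Complex.exp (x * Complex.I) with hwdef
  have hw0 : w ≠ 0 := Complex.exp_ne_zero _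
  have hw11 : w ^ 11 = 1 := by
    rw [hwdef, ← Complex.exp_nat_mul]
    have h : ((11:ℕ):ℂ) * (x * Complex.I) = (l:ℤ) * (2 * π * Complex.I) := by
      rw [hx]; push_cast; ring
    rw [h, Complex.exp_int_mul_two_pi_mul_I]
  have hw1 : w ≠ 1 := by
    intro h
    rw [hwdef, Complex.exp_eq_one_iff] at h
    obtain ⟨n, hn⟩ := h
    have him := congrArg Complex.im hn
    simp [Complex.mul_im] at him
    rw [hx] at him
    have : (l : ℝ) = 11 * n := by
      have hpi := Real.pi_pos
      field_simp at him
      nlinarith [him]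
    have : (l : ℤ) = 11 * n := by exact_mod_cast this
    omega
  have hcos : 2 * Complex.cos (x:ℂ) = w + w⁻¹ := by
    rw [Complex.two_cos, hwdef, ← Complex.exp_neg]
    ring_nf
  have key : (w - 1) * (w^5 * (32 * (Complex.cos (x:ℂ))^5 + 16 * (Complex.cos (x:ℂ))^4
      - 32 * (Complex.cos (x:ℂ))^3 - 12 * (Complex.cos (x:ℂ))^2
      + 6 * Complex.cos (x:ℂ) + 1)) = w ^ 11 - 1 := by
    have hc : Complex.cos (x:ℂ) = (w + w⁻¹) / 2 := by
      rw [← hcos]; ring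
    have hwinv : w⁻¹ = w ^ 10 := by
      rw [inv_eq_iff_eq_inv, eq_comm, inv_eq_of_mul_eq_one_right]
      rw [← pow_succ]; exact hw11
    rw [hc, hwinv]
    linear_combination ((-1:ℂ) + w^5 + 2*w^6 - 6*w^7 - w^8 + 5*w^9 - w^11 + 3*w^15
      - 8*w^16 - 4*w^17 + 10*w^18 - w^22 - 3*w^25 - 6*w^26 + 10*w^27 - w^33
      - 4*w^35 + 5*w^36 - w^44 + w^45) * hw11
  rw [hw11, sub_self] at key
  have hwm1 : w - 1 ≠ 0 := sub_ne_zero.mpr hw1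
  have hw5 : w ^ 5 ≠ 0 := pow_ne_zero _ hw0
  have hzero : 32 * (Complex.cos (x:ℂ))^5 + 16 * (Complex.cos (x:ℂ))^4
      - 32 * (Complex.cos (x:ℂ))^3 - 12 * (Complex.cos (x:ℂ))^2
      + 6 * Complex.cos (x:ℂ) + 1 = 0 := by
    rcases mul_eq_zero.mp key with h | h
    · exact absurd h hwm1
    · rcases mul_eq_zero.mp h with h' | h'
      · exact absurd h' hw5
      · exact h'
  rw [← Complex.ofReal_cos] at hzero
  have h32 : (32:ℝ) * (Real.cos x)^5 + 16 * (Real.cos x)^4 - 32 * (Real.cos x)^3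
      - 12 * (Real.cos x)^2 + 6 * Real.cos x + 1 = 0 := by
    exact_mod_cast hzero
  linarith

private noncomputable def EZ : ℤ[X] :=
  X^5 + C 11 * X^4 + C 44 * X^3 + C 77 * X^2 + C 55 * X + C 11

private lemma EZ_monic : EZ.Monic := by unfold EZ; monicity!

private lemma EZ_natDegree : EZ.natDegree = 5 := by unfold EZ; compute_degree!

private lemma EZ_degree : EZ.degree = 5 := by
  rw [degree_eq_natDegree EZ_monic.ne_zero, EZ_natDegree]; rfl

private lemma EZ_coeff0 : EZ.coeff 0 = 11 := by simp [EZ, coeff_C, coeff_X_pow]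

private lemma EZ_irreducible : Irreducible EZ := by
  apply irreducible_of_eisenstein_criterion (P := Ideal.span {(11:ℤ)})
  · rw [Ideal.span_singleton_prime (by norm_num)]; norm_num
  · rw [EZ_monic.leadingCoeff, Ideal.mem_span_singleton]; norm_num
  · intro n hn
    rw [EZ_degree] at hn
    have hn5 : n < 5 := by exact_mod_cast hn
    rw [Ideal.mem_span_singleton]
    interval_cases n <;> norm_num [EZ, coeff_C, coeff_X_pow, coeff_X, coeff_one]
  · rw [EZ_degree]; norm_num
  · rw [Ideal.span_singleton_pow, Ideal.mem_span_singleton, EZ_coeff0]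
    norm_num
  · exact EZ_monic.isPrimitive

private noncomputable def EQ : ℚ[X] := EZ.map (Int.castRingHom ℚ)

private lemma EQ_irreducible : Irreducible EQ :=
  (Polynomial.IsPrimitive.Int.irreducible_iff_irreducible_map_cast
    EZ_monic.isPrimitive).mp EZ_irreducible

private noncomputable def Pq : ℚ[X] :=
  X ^ 5 + C (1 / 2 : ℚ) * X ^ 4 - X ^ 3 - C (3 / 8 : ℚ) * X ^ 2
    + C (3 / 16 : ℚ) * X + C (1 / 32 : ℚ)

private lemma Pq_monic : Pq.Monic := by unfold Pq; monicity!

private lemma h32 : C (32:ℚ) * Pq = (algEquivCMulXAddC (2:ℚ) (-2:ℚ)) EQ := by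
  have hEQ : EQ = X^5 + C (11:ℚ) * X^4 + C 44 * X^3 + C 77 * X^2 + C 55 * X + C 11 := by
    simp [EQ, EZ, Polynomial.map_add, Polynomial.map_mul, Polynomial.map_pow]
    simp [map_ofNat]
  rw [hEQ]
  rw [algEquivCMulXAddC_apply]
  simp only [map_add, map_mul, map_pow, aeval_X, aeval_C, algebraMap_eq]
  simp only [Pq, mul_add, mul_sub, ← mul_assoc, ← C_mul, ← C_neg]
  norm_num
  simp only [map_ofNat, map_one]
  ring

private lemma Pq_irreducible : Irreducible Pq := by
  have h1 : Irreducible ((algEquivCMulXAddC (2:ℚ) (-2:ℚ)) EQ) :=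
    (MulEquiv.irreducible_iff (algEquivCMulXAddC (2:ℚ) (-2:ℚ))).mpr EQ_irreducible
  rw [← h32] at h1
  have hu : IsUnit (C (32:ℚ)) := isUnit_C.mpr (isUnit_iff_ne_zero.mpr (by norm_num))
  exact (associated_unit_mul_left _ _ hu).irreducible h1

private lemma Pq_aeval (l : ℕ) (hl1 : 1 ≤ l) (hl5 : l ≤ 5) :
    Polynomial.aeval (Real.cos (2 * (l:ℝ) * π / 11)) Pq = 0 := by
  have h := cos_root_aux l hl1 hl5
  simp only [Pq, map_add, map_sub, map_mul, map_pow, aeval_X, aeval_C, eq_ratCast]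
  push_cast
  linarith

/-- The minimal polynomial over ℚ of `cos(2π/11)` is
`x⁵ + (1/2)x⁴ − x³ − (3/8)x² + (3/16)x + 1/32`; it is irreducible over ℚ and has
`cos(2lπ/11)`, `l = 1,…,5`, as roots. -/
theorem stmt_12 :
    minpoly ℚ (Real.cos (2 * π / 11))
        = X ^ 5 + C (1 / 2 : ℚ) * X ^ 4 - X ^ 3 - C (3 / 8 : ℚ) * X ^ 2
          + C (3 / 16 : ℚ) * X + C (1 / 32 : ℚ) ∧
    Irreducible (X ^ 5 + C (1 / 2 : ℚ) * X ^ 4 - X ^ 3 - C (3 / 8 : ℚ) * X ^ 2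
          + C (3 / 16 : ℚ) * X + C (1 / 32 : ℚ)) ∧
    (∀ l ∈ (Finset.Icc 1 5 : Finset ℕ),
      Polynomial.aeval (Real.cos (2 * (l : ℝ) * π / 11))
          (X ^ 5 + C (1 / 2 : ℚ) * X ^ 4 - X ^ 3 - C (3 / 8 : ℚ) * X ^ 2
            + C (3 / 16 : ℚ) * X + C (1 / 32 : ℚ)) = 0) := by
  refine ⟨?_, ?_, ?_⟩
  · have h1 : Polynomial.aeval (Real.cos (2 * π / 11)) Pq = 0 := by
      have := Pq_aeval 1 le_rfl (by norm_num)
      norm_num at this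
      convert this using 3
    have := minpoly.eq_of_irreducible_of_monic Pq_irreducible h1 Pq_monic
    rw [← this, Pq]
  · exact Pq_irreducible
  · intro l hl
    rw [Finset.mem_Icc] at hl
    exact Pq_aeval l hl.1 hl.2
end

section
/- For d = 20 and k = 3, the quantity N = (8/7)·Σ_{m=0}^{3} Σ_{j=0}^{3−m} sin²((2j+1)π/7)·(C(19+2m, 2m) − C(17+2m, 2m−2)) satisfies 47868.2 < N < 47868.8; in particular N is not an integer. -/
/-!
The numbers `sin² (kπ/7)`, `k = 1, 3, 5`, are the roots of `64 x³ - 112 x² + 56 x - 7`: divide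
the expansion of `sin 7θ` as a polynomial in `sin θ` by `sin θ`. Crude bounds (`sin x < x`,
`x - x³/6 < sin x`) place each root in an interval on which the cubic is strictly monotone, and
the sign of the cubic at rational points of that interval then pins the root down to `10⁻⁶`.
Since `sin π = 0`, the double sum collapses to
`177100 sin² (π/7) + 8855 sin² (3π/7) + 210 sin² (5π/7)`, whence `47868.39 < N < 47868.46`.
-/

open Real Set

lemma StrictMonoOn.mem_Ioo {α β : Type*} [LinearOrder α] [Preorder β] {f : α → β} {s : Set α}
    (hf : StrictMonoOn f s) {a b x : α} (ha : a ∈ s) (hb : b ∈ s) (hx : x ∈ s)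
    (hax : f a < f x) (hxb : f x < f b) : x ∈ Ioo a b :=
  ⟨(hf.lt_iff_lt ha hx).1 hax, (hf.lt_iff_lt hx hb).1 hxb⟩

lemma StrictAntiOn.mem_Ioo {α β : Type*} [LinearOrder α] [Preorder β] {f : α → β} {s : Set α}
    (hf : StrictAntiOn f s) {a b x : α} (ha : a ∈ s) (hb : b ∈ s) (hx : x ∈ s)
    (hax : f x < f a) (hxb : f b < f x) : x ∈ Ioo a b :=
  ⟨(hf.lt_iff_gt hx ha).1 hax, (hf.lt_iff_gt hb hx).1 hxb⟩

lemma not_exists_intCast_eq_of_lt_of_lt {R : Type*} [Ring R] [LinearOrder R]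
    [IsStrictOrderedRing R] (n : ℤ) {x : R} (h₁ : n < x) (h₂ : x < n + 1) :
    ¬ ∃ z : ℤ, (z : R) = x := by
  rintro ⟨z, rfl⟩
  have : n < z := by exact_mod_cast h₁
  have : z < n + 1 := by exact_mod_cast h₂
  omega

lemma sin_seven_mul (θ : ℝ) :
    sin (7 * θ) = sin θ * (7 - 56 * sin θ ^ 2 + 112 * sin θ ^ 4 - 64 * sin θ ^ 6) := by
  have h : 7 * θ = θ + θ + θ + θ + θ + θ + θ := by ring
  rw [h]
  simp only [sin_add, cos_add]
  linear_combination (7 * sin θ + 7 * sin θ * cos θ ^ 2 + 7 * sin θ * cos θ ^ 4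
    - 49 * sin θ ^ 3 - 42 * sin θ ^ 3 * cos θ ^ 2 + 63 * sin θ ^ 5) * sin_sq_add_cos_sq θ

def sinSqSevenCubic (x : ℝ) : ℝ := 64 * x ^ 3 - 112 * x ^ 2 + 56 * x - 7

lemma sinSqSevenCubic_sin_sq_eq_zero {θ : ℝ} (h7 : sin (7 * θ) = 0) (h : sin θ ≠ 0) :
    sinSqSevenCubic (sin θ ^ 2) = 0 := by
  rw [sin_seven_mul] at h7
  unfold sinSqSevenCubic
  linear_combination -(mul_eq_zero.mp h7).resolve_left h

lemma sinSqSevenCubic_sin_sq_nat_mul_pi_div_seven {k : ℕ} (hk₀ : 0 < k) (hk : k < 7) :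
    sinSqSevenCubic (sin (k * π / 7) ^ 2) = 0 := by
  refine sinSqSevenCubic_sin_sq_eq_zero ?_ (sin_pos_of_pos_of_lt_pi ?_ ?_).ne'
  · rw [show 7 * (k * π / 7) = k * π by ring, sin_nat_mul_pi]
  · have : (0 : ℝ) < k := by exact_mod_cast hk₀
    positivity
  · have : (k : ℝ) < 7 := by exact_mod_cast hk
    nlinarith [pi_pos]

lemma sinSqSevenCubic_sub (x y : ℝ) :
    sinSqSevenCubic y - sinSqSevenCubic x
      = (y - x) * (64 * (x ^ 2 + x * y + y ^ 2) - 112 * (x + y) + 56) := by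
  unfold sinSqSevenCubic; ring

lemma strictMonoOn_sinSqSevenCubic_Icc_zero : StrictMonoOn sinSqSevenCubic (Icc 0 (1 / 4)) := by
  rintro x ⟨hx₀, hx₁⟩ y ⟨hy₀, hy₁⟩ hxy
  have := sinSqSevenCubic_sub x y
  have hq : 0 < 64 * (x ^ 2 + x * y + y ^ 2) - 112 * (x + y) + 56 := by nlinarith
  nlinarith [mul_pos (sub_pos.2 hxy) hq]

lemma strictAntiOn_sinSqSevenCubic_Icc : StrictAntiOn sinSqSevenCubic (Icc 0.45 0.75) := by
  rintro x ⟨hx₀, hx₁⟩ y ⟨hy₀, hy₁⟩ hxy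
  have := sinSqSevenCubic_sub x y
  have hq : 64 * (x ^ 2 + x * y + y ^ 2) - 112 * (x + y) + 56 < 0 := by nlinarith
  nlinarith [mul_neg_of_pos_of_neg (sub_pos.2 hxy) hq]

lemma strictMonoOn_sinSqSevenCubic_Icc_one : StrictMonoOn sinSqSevenCubic (Icc (15 / 16) 1) := by
  rintro x ⟨hx₀, hx₁⟩ y ⟨hy₀, hy₁⟩ hxy
  have := sinSqSevenCubic_sub x y
  have hq : 0 < 64 * (x ^ 2 + x * y + y ^ 2) - 112 * (x + y) + 56 := by nlinarith
  nlinarith [mul_pos (sub_pos.2 hxy) hq]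

lemma sin_sq_pi_div_seven_mem_Icc : sin (π / 7) ^ 2 ∈ Icc 0 (1 / 4) := by
  have hx : 0 < π / 7 := by positivity
  have h₀ := sin_pos_of_pos_of_lt_pi hx (by linarith [pi_pos])
  have h₁ := sin_lt hx
  constructor <;> nlinarith [pi_lt_d2]

lemma sin_sq_three_pi_div_seven_mem_Icc : sin (3 * π / 7) ^ 2 ∈ Icc (15 / 16) 1 := by
  have hx : 0 < π / 14 := by positivity
  have h₀ := sin_pos_of_pos_of_lt_pi hx (by linarith [pi_pos])
  have h₁ := sin_lt hx
  have h : sin (3 * π / 7) ^ 2 = 1 - sin (π / 14) ^ 2 := by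
    rw [show 3 * π / 7 = π / 2 - π / 14 by ring, sin_pi_div_two_sub]
    nlinarith [sin_sq_add_cos_sq (π / 14)]
  refine ⟨?_, sin_sq_le_one _⟩
  nlinarith [pi_lt_d2]

lemma sin_sq_five_pi_div_seven_mem_Icc : sin (5 * π / 7) ^ 2 ∈ Icc 0.45 0.75 := by
  have hx : 0 < 2 * π / 7 := by positivity
  have h : sin (5 * π / 7) = sin (2 * π / 7) := by
    rw [show 5 * π / 7 = π - 2 * π / 7 by ring, sin_pi_sub]
  have h₀ := sin_pos_of_pos_of_lt_pi hx (by linarith [pi_pos])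
  have hlo := sin_gt_sub_cube hx
  have hhi : sin (2 * π / 7) < sin (π / 3) :=
    sin_lt_sin_of_lt_of_le_pi_div_two (by linarith [pi_pos]) (by linarith [pi_pos])
      (by linarith [pi_pos])
  rw [sin_pi_div_three] at hhi
  have h3 : √3 ^ 2 = 3 := sq_sqrt (by norm_num)
  have hx₁ : 6 / 7 < 2 * π / 7 := by linarith [pi_gt_three]
  have hcube : (2 * π / 7) ^ 3 < 0.9 ^ 3 :=
    pow_lt_pow_left₀ (by linarith [pi_lt_d2]) hx.le (by norm_num)
  rw [h]
  constructor <;> nlinarith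

lemma sin_sq_pi_div_seven_mem_Ioo : sin (π / 7) ^ 2 ∈ Ioo 0.188255 0.1882551 := by
  have hroot : sinSqSevenCubic (sin (π / 7) ^ 2) = 0 := by
    simpa using sinSqSevenCubic_sin_sq_nat_mul_pi_div_seven (k := 1) one_pos (by norm_num)
  refine strictMonoOn_sinSqSevenCubic_Icc_zero.mem_Ioo ⟨by norm_num, by norm_num⟩
    ⟨by norm_num, by norm_num⟩ sin_sq_pi_div_seven_mem_Icc ?_ ?_ <;>
  · rw [hroot]; norm_num [sinSqSevenCubic]

lemma sin_sq_three_pi_div_seven_mem_Ioo : sin (3 * π / 7) ^ 2 ∈ Ioo 0.950484 0.950485 := by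
  have hroot : sinSqSevenCubic (sin (3 * π / 7) ^ 2) = 0 := by
    simpa using sinSqSevenCubic_sin_sq_nat_mul_pi_div_seven (k := 3) (by norm_num) (by norm_num)
  refine strictMonoOn_sinSqSevenCubic_Icc_one.mem_Ioo ⟨by norm_num, by norm_num⟩
    ⟨by norm_num, by norm_num⟩ sin_sq_three_pi_div_seven_mem_Icc ?_ ?_ <;>
  · rw [hroot]; norm_num [sinSqSevenCubic]

lemma sin_sq_five_pi_div_seven_mem_Ioo : sin (5 * π / 7) ^ 2 ∈ Ioo 0.6112 0.6113 := by
  have hroot : sinSqSevenCubic (sin (5 * π / 7) ^ 2) = 0 := by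
    simpa using sinSqSevenCubic_sin_sq_nat_mul_pi_div_seven (k := 5) (by norm_num) (by norm_num)
  refine strictAntiOn_sinSqSevenCubic_Icc.mem_Ioo ⟨by norm_num, by norm_num⟩
    ⟨by norm_num, by norm_num⟩ sin_sq_five_pi_div_seven_mem_Icc ?_ ?_ <;>
  · rw [hroot]; norm_num [sinSqSevenCubic]

lemma sum_sin_sq_mul_choose_sub_choose_eq :
    ∑ m ∈ Finset.range 4, ∑ j ∈ Finset.range (4 - m),
        sin ((2 * (j : ℝ) + 1) * π / 7) ^ 2
          * (((19 + 2 * m).choose (2 * m) : ℝ)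
            - if m = 0 then 0 else ((17 + 2 * m).choose (2 * m - 2) : ℝ))
      = 177100 * sin (π / 7) ^ 2 + 8855 * sin (3 * π / 7) ^ 2 + 210 * sin (5 * π / 7) ^ 2 := by
  simp only [Finset.sum_range_succ, Finset.sum_range_zero]
  norm_num [Nat.choose_eq_descFactorial_div_factorial, Nat.descFactorial, Nat.factorial]
  ring

/-- For `d = 20`, `k = 3`, the quantity
`N = (8/7) Σ_{m=0}^{3} Σ_{j=0}^{3−m} sin²((2j+1)π/7) (C(19+2m,2m) − C(17+2m,2m−2))`
(with the convention that the second binomial is `0` when `m = 0`)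
satisfies `47868.2 < N < 47868.8`; in particular `N` is not an integer. -/
theorem stmt_18 :
    (47868.2 : ℝ)
        < (8 / 7) * ∑ m ∈ Finset.range 4, ∑ j ∈ Finset.range (4 - m),
            Real.sin ((2 * (j : ℝ) + 1) * π / 7) ^ 2
              * (((19 + 2 * m).choose (2 * m) : ℝ)
                - if m = 0 then 0 else ((17 + 2 * m).choose (2 * m - 2) : ℝ)) ∧
    (8 / 7) * (∑ m ∈ Finset.range 4, ∑ j ∈ Finset.range (4 - m),
            Real.sin ((2 * (j : ℝ) + 1) * π / 7) ^ 2
              * (((19 + 2 * m).choose (2 * m) : ℝ)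
                - if m = 0 then 0 else ((17 + 2 * m).choose (2 * m - 2) : ℝ)))
        < 47868.8 ∧
    ¬ ∃ z : ℤ, (z : ℝ)
        = (8 / 7) * ∑ m ∈ Finset.range 4, ∑ j ∈ Finset.range (4 - m),
            Real.sin ((2 * (j : ℝ) + 1) * π / 7) ^ 2
              * (((19 + 2 * m).choose (2 * m) : ℝ)
                - if m = 0 then 0 else ((17 + 2 * m).choose (2 * m - 2) : ℝ)) := by
  rw [sum_sin_sq_mul_choose_sub_choose_eq]
  obtain ⟨h₁, h₁'⟩ := sin_sq_pi_div_seven_mem_Ioo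
  obtain ⟨h₃, h₃'⟩ := sin_sq_three_pi_div_seven_mem_Ioo
  obtain ⟨h₅, h₅'⟩ := sin_sq_five_pi_div_seven_mem_Ioo
  refine ⟨by linarith, by linarith, not_exists_intCast_eq_of_lt_of_lt 47868 ?_ ?_⟩ <;>
  · push_cast; linarith
end
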